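/- Fix C ≥ 1 and Q ≥ 1, and let L divide C with K = C/L and K ≤ Q. Then the ratio of the basic CTMDP per-iteration cost (C+1)²(Q+C/2+1)(C²/6+4C/3+2Q+2) to the aggregated per-iteration bound L²(L+Q/K)(L²/2+3L/2+2Q/K) is at least K³ · (a positive constant independent of C, Q, L); in particular, when Q = C the ratio is Ω(K⁴). -/
import Mathlib


/-- Computational saving from aggregation: with `C = L·K` and `K ≤ Q`, the per-iteration
cost `(C+1)²(Q+C/2+1)(C²/6+4C/3+2Q+2)` of the basic CTMDP exceeds the aggregated bound
`L²(L+Q/K)(L²/2+3L/2+2Q/K)` by a factor of at least `c·K³` for an absolute constant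
`c > 0`; and when `Q = C` the ratio is `Ω(K⁴)`. -/
theorem stmt19 :
    (∃ c : ℚ, 0 < c ∧ ∀ C Q L K : ℕ, 1 ≤ C → 1 ≤ Q → 1 ≤ L → 1 ≤ K →
      C = L * K → K ≤ Q →
      c * (K : ℚ) ^ 3 *
          ((L : ℚ) ^ 2 * ((L : ℚ) + (Q : ℚ) / K) * ((L : ℚ) ^ 2 / 2 + 3 * L / 2 + 2 * ((Q : ℚ) / K)))
        ≤ ((C : ℚ) + 1) ^ 2 * ((Q : ℚ) + (C : ℚ) / 2 + 1) *
            ((C : ℚ) ^ 2 / 6 + 4 * (C : ℚ) / 3 + 2 * Q + 2)) ∧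
    (∃ c : ℚ, 0 < c ∧ ∀ C L K : ℕ, 1 ≤ C → 1 ≤ L → 1 ≤ K →
      C = L * K → K ≤ C →
      c * (K : ℚ) ^ 4 *
          ((L : ℚ) ^ 2 * ((L : ℚ) + (C : ℚ) / K) * ((L : ℚ) ^ 2 / 2 + 3 * L / 2 + 2 * ((C : ℚ) / K)))
        ≤ ((C : ℚ) + 1) ^ 2 * ((C : ℚ) + (C : ℚ) / 2 + 1) *
            ((C : ℚ) ^ 2 / 6 + 4 * (C : ℚ) / 3 + 2 * C + 2)) := by
  constructor
  · refine ⟨1/6, by norm_num, ?_⟩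
    intro C Q L K hC1 hQ1 hL1 hK1 hCLK hKQ
    have hk : (1 : ℚ) ≤ (K : ℚ) := by exact_mod_cast hK1
    have hl : (1 : ℚ) ≤ (L : ℚ) := by exact_mod_cast hL1
    have hq : (1 : ℚ) ≤ (Q : ℚ) := by exact_mod_cast hQ1
    have hkq : (K : ℚ) ≤ (Q : ℚ) := by exact_mod_cast hKQ
    have hk0 : (K : ℚ) ≠ 0 := by positivity
    set l : ℚ := (L : ℚ)
    set k : ℚ := (K : ℚ)
    set q : ℚ := (Q : ℚ)
    have hc : (C : ℚ) = l * k := by rw [hCLK]; push_cast; ring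
    set a : ℚ := q / k with ha
    have hak : a * k = q := div_mul_cancel₀ q hk0
    have ha1 : 1 ≤ a := (one_le_div (by linarith)).2 hkq
    have haq : a ≤ q := by nlinarith
    rw [hc]
    have h1 : k ^ 2 * l ^ 2 ≤ (l * k + 1) ^ 2 := by nlinarith
    have h2 : (k / 2) * (l + a) ≤ q + l * k / 2 + 1 := by nlinarith
    have h3 : (1 / 3) * (l ^ 2 / 2 + 3 * l / 2 + 2 * a) ≤
        (l * k) ^ 2 / 6 + 4 * (l * k) / 3 + 2 * q + 2 := by
      nlinarith [mul_nonneg (by nlinarith : (0:ℚ) ≤ k ^ 2 - 1) (sq_nonneg l),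
        mul_nonneg (by linarith : (0:ℚ) ≤ k - 1) (by linarith : (0:ℚ) ≤ l)]
    calc 1 / 6 * k ^ 3 * (l ^ 2 * (l + a) * (l ^ 2 / 2 + 3 * l / 2 + 2 * a))
        = (k ^ 2 * l ^ 2) * ((k / 2) * (l + a)) *
            ((1 / 3) * (l ^ 2 / 2 + 3 * l / 2 + 2 * a)) := by ring
      _ ≤ (l * k + 1) ^ 2 * (q + l * k / 2 + 1) *
            ((l * k) ^ 2 / 6 + 4 * (l * k) / 3 + 2 * q + 2) := by
          apply mul_le_mul (mul_le_mul h1 h2 (by positivity) (by positivity)) h3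
            (by positivity) (by positivity)
  · refine ⟨1/32, by norm_num, ?_⟩
    intro C L K hC1 hL1 hK1 hCLK hKC
    have hk : (1 : ℚ) ≤ (K : ℚ) := by exact_mod_cast hK1
    have hl : (1 : ℚ) ≤ (L : ℚ) := by exact_mod_cast hL1
    have hk0 : (K : ℚ) ≠ 0 := by positivity
    set l : ℚ := (L : ℚ)
    set k : ℚ := (K : ℚ)
    have hc : (C : ℚ) = l * k := by rw [hCLK]; push_cast; ring
    rw [hc]
    have hck : l * k / k = l := by field_simp
    rw [hck]
    have h1 : k ^ 2 * l ^ 2 ≤ (l * k + 1) ^ 2 := by nlinarith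
    have h2 : k * l ≤ l * k + l * k / 2 + 1 := by nlinarith
    have h3 : (k / 32) * (l ^ 2 + 7 * l) ≤
        (l * k) ^ 2 / 6 + 4 * (l * k) / 3 + 2 * (l * k) + 2 := by nlinarith
    calc 1 / 32 * k ^ 4 * (l ^ 2 * (l + l) * (l ^ 2 / 2 + 3 * l / 2 + 2 * l))
        = (k ^ 2 * l ^ 2) * (k * l) * ((k / 32) * (l ^ 2 + 7 * l)) := by ring
      _ ≤ (l * k + 1) ^ 2 * (l * k + l * k / 2 + 1) *
            ((l * k) ^ 2 / 6 + 4 * (l * k) / 3 + 2 * (l * k) + 2) := by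
          apply mul_le_mul (mul_le_mul h1 h2 (by positivity) (by positivity)) h3
            (by positivity) (by positivity)
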